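/- Every bipartite graph with maximum degree at most 3 admits an interval edge coloring. -/

import Mathlib

open SimpleGraph

variable {V : Type*}

/-- A proper edge coloring: distinct edges sharing a vertex get distinct colors. -/
def IsProperEdgeColoring (G : SimpleGraph V) (c : Sym2 V → ℕ) : Prop :=
  ∀ e₁ ∈ G.edgeSet, ∀ e₂ ∈ G.edgeSet, e₁ ≠ e₂ → (∃ v, v ∈ e₁ ∧ v ∈ e₂) → c e₁ ≠ c e₂

/-- The set of colors appearing on edges incident to `v`. -/
def colorsAt (G : SimpleGraph V) (c : Sym2 V → ℕ) (v : V) : Set ℕ :=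
  {n | ∃ e ∈ G.edgeSet, v ∈ e ∧ c e = n}

/-- An interval coloring: a proper edge coloring with positive integer colors such that
the set of colors at each vertex is an interval of integers. -/
def IsIntervalColoring (G : SimpleGraph V) (c : Sym2 V → ℕ) : Prop :=
  IsProperEdgeColoring G c ∧ (∀ e ∈ G.edgeSet, 1 ≤ c e) ∧
    ∀ v, ∀ a ∈ colorsAt G c v, ∀ b ∈ colorsAt G c v, ∀ k, a ≤ k → k ≤ b →
      k ∈ colorsAt G c v

def IntervalColorable (G : SimpleGraph V) : Prop :=
  ∃ c, IsIntervalColoring G c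

/-- The chromatic index: least `t` admitting a proper edge coloring with colors in `{1,…,t}`. -/
noncomputable def chromIndex (G : SimpleGraph V) : ℕ :=
  sInf {t | ∃ c, IsProperEdgeColoring G c ∧ ∀ e ∈ G.edgeSet, c e ∈ Finset.Icc 1 t}

/-- A decomposition of `G` into `k` edge-disjoint interval colorable subgraphs. -/
def IntervalDecomposition (G : SimpleGraph V) (k : ℕ) : Prop :=
  ∃ H : Fin k → SimpleGraph V, (∀ i, H i ≤ G) ∧ (∀ i, IntervalColorable (H i)) ∧
    ∀ e ∈ G.edgeSet, ∃! i, e ∈ (H i).edgeSet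

/-- The interval coloring thickness of `G`. -/
noncomputable def intervalThickness (G : SimpleGraph V) : ℕ :=
  sInf {k | IntervalDecomposition G k}

/-!
By Kőnig's theorem, proved with Kempe chains, `G` has a proper edge colouring with colours
`0, 1, 2`. The edges of colour `0` at vertices of degree `3` form a matching `N` covering every
vertex of degree `3`, so `G - N` has maximum degree `2` and, by Kőnig's theorem again, a proper
edge colouring with colours `2, 3`. Every edge of `N` has an end of degree `3`, which sees both `2`
and `3` in `G - N`. Colouring an edge of `N` by `4` when its other end sees only `3`, and by `1`
otherwise, makes the colours at every vertex consecutive.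
-/

section EdgeColoring

variable {G : SimpleGraph V} {c : Sym2 V → ℕ}

lemma colorsAt_eq_image (G : SimpleGraph V) (c : Sym2 V → ℕ) (v : V) :
    colorsAt G c v = c '' G.incidenceSet v := by
  ext n
  simp [colorsAt, incidenceSet, and_assoc]

lemma IsProperEdgeColoring.mono_left {G' : SimpleGraph V} (h : G' ≤ G)
    (hc : IsProperEdgeColoring G c) : IsProperEdgeColoring G' c := fun e₁ h₁ e₂ h₂ =>
  hc e₁ (edgeSet_mono h h₁) e₂ (edgeSet_mono h h₂)

lemma IsProperEdgeColoring.injOn_incidenceSet (hc : IsProperEdgeColoring G c) (v : V) :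
    Set.InjOn c (G.incidenceSet v) := fun e₁ h₁ e₂ h₂ heq =>
  by_contra fun hne => hc e₁ h₁.1 e₂ h₂.1 hne ⟨v, h₁.2, h₂.2⟩ heq

lemma exists_lt_notMem_colorsAt [Finite V] (c : Sym2 V → ℕ) {v : V} {k : ℕ}
    (hv : (G.incidenceSet v).ncard < k) : ∃ a < k, a ∉ colorsAt G c v := by
  rw [colorsAt_eq_image]
  have : (c '' G.incidenceSet v).ncard < (Set.Iio k).ncard := by
    rw [Set.ncard_Iio_nat]
    exact (Set.ncard_image_le).trans_lt hv
  simpa using Set.exists_mem_notMem_of_ncard_lt_ncard this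

lemma IsProperEdgeColoring.mem_colorsAt [Finite V] (hc : IsProperEdgeColoring G c) {k : ℕ}
    (hk : ∀ e ∈ G.edgeSet, c e < k) {v : V} (hv : (G.incidenceSet v).ncard = k) {m : ℕ}
    (hm : m < k) : m ∈ colorsAt G c v := by
  have hsub : colorsAt G c v ⊆ Set.Iio k := fun _ ⟨e, he, _, hce⟩ => hce ▸ hk e he
  have heq : colorsAt G c v = Set.Iio k := Set.eq_of_subset_of_ncard_le hsub
    (by rw [Set.ncard_Iio_nat, colorsAt_eq_image, (hc.injOn_incidenceSet v).ncard_image, hv])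
  exact heq ▸ hm

lemma incidenceSet_deleteEdges (G : SimpleGraph V) (s : Set (Sym2 V)) (v : V) :
    (G.deleteEdges s).incidenceSet v = G.incidenceSet v \ s := by
  ext e
  simp [incidenceSet, edgeSet_deleteEdges, and_right_comm]

end EdgeColoring

section Kempe

variable {H : SimpleGraph V} {c : Sym2 V → ℕ} {a b : ℕ}

def kempeGraph (H : SimpleGraph V) (c : Sym2 V → ℕ) (a b : ℕ) : SimpleGraph V where
  Adj x y := H.Adj x y ∧ (c s(x, y) = a ∨ c s(x, y) = b)
  symm := ⟨fun x _ h => ⟨h.1.symm, Sym2.eq_swap (a := x) ▸ h.2⟩⟩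
  loopless := ⟨fun x h => H.loopless.irrefl x h.1⟩

lemma kempeGraph_le : kempeGraph H c a b ≤ H := fun _ _ h => h.1

lemma kempeGraph_reachable_of_mem {u x y : V} {e : Sym2 V} (he : e ∈ H.edgeSet)
    (hab : c e = a ∨ c e = b) (hx : x ∈ e) (hy : y ∈ e)
    (hux : (kempeGraph H c a b).Reachable u x) :
    (kempeGraph H c a b).Reachable u y := by
  induction e using Sym2.ind with
  | _ p q =>
    have hpq : (kempeGraph H c a b).Adj p q := ⟨he, hab⟩
    rcases Sym2.mem_iff.mp hx with rfl | rfl <;> rcases Sym2.mem_iff.mp hy with rfl | rfl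
    exacts [hux, hux.trans hpq.reachable, hux.trans hpq.symm.reachable, hux]

lemma IsProperEdgeColoring.color_cons_of_isPath {K : SimpleGraph V}
    (hc : IsProperEdgeColoring K c) (hab : ∀ x y, K.Adj x y → c s(x, y) = a ∨ c s(x, y) = b)
    {x y : V} (p : K.Walk x y) (hy : ∀ z, K.Adj y z → c s(y, z) = a) {w : V} (h : K.Adj w x)
    (hp : (Walk.cons h p).IsPath) :
    c s(w, x) = if Even p.length then a else b := by
  induction p generalizing w with
  | nil => simpa [Sym2.eq_swap] using hy w h.symm
  | @cons x x₂ _ h₂ p ih =>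
    have hwx₂ : w ≠ x₂ := by
      rintro rfl
      simp at hp
    have hne : c s(w, x) ≠ c s(x, x₂) :=
      hc _ h _ h₂ (by simp [hwx₂, h.ne]) ⟨x, Sym2.mem_mk_right _ _, Sym2.mem_mk_left _ _⟩
    rw [ih hy h₂ hp.of_cons] at hne
    simp only [Walk.length_cons, Nat.even_add_one]
    split_ifs at hne ⊢ <;> rcases hab w x h with h' | h' <;> simp_all

lemma not_reachable_kempeGraph (hc : IsProperEdgeColoring H c) (C : H.Coloring Bool) {u v : V}
    (huv : C u ≠ C v) (ha : a ∉ colorsAt H c u) (hb : b ∉ colorsAt H c v) :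
    ¬(kempeGraph H c a b).Reachable u v := by
  -- a Kempe path from `u` to `v` starts with colour `b` and ends with colour `a`, so it has even
  -- length, while `u` and `v` lie on opposite sides
  classical
  rintro ⟨p⟩
  obtain ⟨p, hp⟩ := p.toPath
  cases p with
  | nil => exact huv rfl
  | @cons _ x _ h q =>
    have hv : ∀ z, (kempeGraph H c a b).Adj v z → c s(v, z) = a := fun z hz =>
      hz.2.resolve_right fun hbz => hb ⟨_, hz.1, Sym2.mem_mk_left _ _, hbz⟩
    have hfirst := (hc.mono_left kempeGraph_le).color_cons_of_isPath (fun _ _ h => h.2) q hv h hp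
    have hodd : ¬Even q.length := fun heven =>
      ha ⟨_, h.1, Sym2.mem_mk_left _ _, by simpa [heven] using hfirst⟩
    have hparity := Coloring.even_length_iff_congr
      (C.comp (Hom.ofLE kempeGraph_le) : (kempeGraph H c a b).Coloring Bool) (Walk.cons h q)
    rw [Walk.length_cons, Nat.even_add_one] at hparity
    exact huv (Bool.eq_iff_iff.mpr (hparity.mp hodd))

open Classical in
/-- The condition also catches edges of other colours meeting the chain; `Equiv.swap a b` fixes
their colours. -/
noncomputable def kempeSwap (H : SimpleGraph V) (c : Sym2 V → ℕ) (a b : ℕ) (u : V) :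
    Sym2 V → ℕ := fun e =>
  if ∃ x ∈ e, (kempeGraph H c a b).Reachable u x then Equiv.swap a b (c e) else c e

lemma isProperEdgeColoring_kempeSwap (hc : IsProperEdgeColoring H c) (u : V) :
    IsProperEdgeColoring H (kempeSwap H c a b u) := by
  rintro e₁ h₁ e₂ h₂ hne ⟨w, hw₁, hw₂⟩ heq
  have hc₁₂ := hc e₁ h₁ e₂ h₂ hne ⟨w, hw₁, hw₂⟩
  have chain : ∀ {e e' : Sym2 V}, e ∈ H.edgeSet → w ∈ e → w ∈ e' →
      (∃ x ∈ e, (kempeGraph H c a b).Reachable u x) → (c e = a ∨ c e = b) →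
      ∃ x ∈ e', (kempeGraph H c a b).Reachable u x :=
    fun he hw hw' ⟨_, hx, hux⟩ hab => ⟨w, hw', kempeGraph_reachable_of_mem he hab hx hw hux⟩
  unfold kempeSwap at heq
  split_ifs at heq with hr₁ hr₂ hr₂
  · exact hc₁₂ ((Equiv.swap a b).injective heq)
  · have hab : c e₁ ≠ a ∧ c e₁ ≠ b :=
      not_or.mp fun hab => hr₂ (chain h₁ hw₁ hw₂ hr₁ hab)
    exact hc₁₂ (by rwa [Equiv.swap_apply_of_ne_of_ne hab.1 hab.2] at heq)
  · have hab : c e₂ ≠ a ∧ c e₂ ≠ b :=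
      not_or.mp fun hab => hr₁ (chain h₂ hw₂ hw₁ hr₂ hab)
    exact hc₁₂ (by rwa [Equiv.swap_apply_of_ne_of_ne hab.1 hab.2] at heq)
  · exact hc₁₂ heq

lemma kempeSwap_eq_or (H : SimpleGraph V) (c : Sym2 V → ℕ) (a b : ℕ) (u : V) (e : Sym2 V) :
    kempeSwap H c a b u e = c e ∨ kempeSwap H c a b u e = a ∨ kempeSwap H c a b u e = b := by
  unfold kempeSwap
  split_ifs
  · rw [Equiv.swap_apply_def]
    split_ifs <;> simp
  · exact Or.inl rfl

lemma notMem_colorsAt_kempeSwap_left {u : V} (ha : a ∉ colorsAt H c u) :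
    b ∉ colorsAt H (kempeSwap H c a b u) u := by
  rintro ⟨e, he, hue, hce⟩
  have hr : ∃ x ∈ e, (kempeGraph H c a b).Reachable u x := ⟨u, hue, Reachable.refl u⟩
  rw [kempeSwap, if_pos hr, Equiv.swap_apply_eq_iff, Equiv.swap_apply_right] at hce
  exact ha ⟨e, he, hue, hce⟩

lemma notMem_colorsAt_kempeSwap_right (hc : IsProperEdgeColoring H c) (C : H.Coloring Bool)
    {u v : V} (huv : C u ≠ C v) (ha : a ∉ colorsAt H c u) (hb : b ∉ colorsAt H c v) :
    b ∉ colorsAt H (kempeSwap H c a b u) v := by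
  rintro ⟨e, he, hve, hce⟩
  unfold kempeSwap at hce
  split_ifs at hce with hr
  · rw [Equiv.swap_apply_eq_iff, Equiv.swap_apply_right] at hce
    obtain ⟨x, hx, hux⟩ := hr
    exact not_reachable_kempeGraph hc C huv ha hb
      (kempeGraph_reachable_of_mem he (Or.inl hce) hx hve hux)
  · exact hb ⟨e, he, hve, hce⟩

end Kempe

section Konig

variable {H : SimpleGraph V}

lemma IsProperEdgeColoring.update [DecidableEq V] {u v : V} {c : Sym2 V → ℕ} {b : ℕ}
    (hc : IsProperEdgeColoring (H.deleteEdges {s(u, v)}) c)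
    (hu : b ∉ colorsAt (H.deleteEdges {s(u, v)}) c u)
    (hv : b ∉ colorsAt (H.deleteEdges {s(u, v)}) c v) :
    IsProperEdgeColoring H (Function.update c s(u, v) b) := by
  have hE : ∀ e ∈ H.edgeSet, e ≠ s(u, v) → e ∈ (H.deleteEdges {s(u, v)}).edgeSet :=
    fun e he hne => by simpa [edgeSet_deleteEdges, he] using hne
  have hfresh : ∀ e ∈ H.edgeSet, e ≠ s(u, v) → ∀ w ∈ s(u, v), w ∈ e → c e ≠ b := by
    intro e he hne w hw hwe hce
    rcases Sym2.mem_iff.mp hw with rfl | rfl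
    exacts [hu ⟨e, hE e he hne, hwe, hce⟩, hv ⟨e, hE e he hne, hwe, hce⟩]
  rintro e₁ h₁ e₂ h₂ hne ⟨w, hw₁, hw₂⟩
  by_cases hq₁ : e₁ = s(u, v) <;> by_cases hq₂ : e₂ = s(u, v)
  · exact absurd (hq₁.trans hq₂.symm) hne
  · subst hq₁
    rw [Function.update_self, Function.update_of_ne hq₂]
    exact (hfresh e₂ h₂ hq₂ w hw₁ hw₂).symm
  · subst hq₂
    rw [Function.update_self, Function.update_of_ne hq₁]
    exact hfresh e₁ h₁ hq₁ w hw₂ hw₁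
  · rw [Function.update_of_ne hq₁, Function.update_of_ne hq₂]
    exact hc e₁ (hE e₁ h₁ hq₁) e₂ (hE e₂ h₂ hq₂) hne ⟨w, hw₁, hw₂⟩

/-- Kőnig's edge colouring theorem. -/
theorem exists_isProperEdgeColoring_lt [Finite V] (hH : H.Colorable 2) {k : ℕ}
    (hdeg : ∀ v, (H.incidenceSet v).ncard ≤ k) :
    ∃ c, IsProperEdgeColoring H c ∧ ∀ e ∈ H.edgeSet, c e < k := by
  induction hn : H.edgeSet.ncard using Nat.strong_induction_on generalizing H with
  | _ n ih =>
  classical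
  rcases H.edgeSet.eq_empty_or_nonempty with hE | ⟨e, he⟩
  · exact ⟨0, fun e₁ h₁ => by simp [hE] at h₁, fun e h => by simp [hE] at h⟩
  induction e using Sym2.ind with
  | _ u v =>
  set H' := H.deleteEdges {s(u, v)}
  have hinc : ∀ w, H'.incidenceSet w = H.incidenceSet w \ {s(u, v)} :=
    incidenceSet_deleteEdges _ _
  obtain ⟨c, hc, hck⟩ := ih _
    (by rw [← hn, edgeSet_deleteEdges]; exact Set.ncard_sdiff_singleton_lt_of_mem he)
    (hH.mono_left (deleteEdges_le _))
    (fun w => hinc w ▸ (Set.ncard_sdiff_singleton_le _ _).trans (hdeg w)) rfl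
  have hmiss : ∀ w ∈ s(u, v), ∃ a < k, a ∉ colorsAt H' c w := fun w hw =>
    exists_lt_notMem_colorsAt c <| by
      have hmem : s(u, v) ∈ H.incidenceSet w := ⟨he, hw⟩
      rw [hinc, Set.ncard_sdiff_singleton_of_mem hmem]
      have := hdeg w
      have : 0 < (H.incidenceSet w).ncard := (Set.ncard_pos).mpr ⟨_, hmem⟩
      omega
  obtain ⟨a, ha, hau⟩ := hmiss u (Sym2.mem_mk_left u v)
  obtain ⟨b, hb, hbv⟩ := hmiss v (Sym2.mem_mk_right u v)
  obtain ⟨C⟩ := hH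
  let C' : H'.Coloring Bool := (H.recolorOfEquiv finTwoEquiv C).comp (Hom.ofLE (deleteEdges_le _))
  have huv : C' u ≠ C' v := (H.recolorOfEquiv finTwoEquiv C).valid he
  refine ⟨Function.update (kempeSwap H' c a b u) s(u, v) b,
    (isProperEdgeColoring_kempeSwap hc u).update (notMem_colorsAt_kempeSwap_left hau)
      (notMem_colorsAt_kempeSwap_right hc C' huv hau hbv), fun e he' => ?_⟩
  by_cases hq : e = s(u, v)
  · rw [hq, Function.update_self]
    exact hb
  · rw [Function.update_of_ne hq]
    have : e ∈ H'.edgeSet := by simpa [H', edgeSet_deleteEdges, he'] using hq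
    rcases kempeSwap_eq_or H' c a b u e with h | h | h <;> rw [h]
    exacts [hck e this, ha, hb]

end Konig

section Matching

variable {G : SimpleGraph V} {N : Set (Sym2 V)} {c : Sym2 V → ℕ}

def IsEdgeMatching (N : Set (Sym2 V)) : Prop :=
  ∀ e₁ ∈ N, ∀ e₂ ∈ N, ∀ v ∈ e₁, v ∈ e₂ → e₁ = e₂

open Classical in
noncomputable def extendByMatching (G : SimpleGraph V) (N : Set (Sym2 V)) (c : Sym2 V → ℕ) :
    Sym2 V → ℕ := fun e =>
  if e ∈ N then
    if ∃ y ∈ e, 1 ∈ colorsAt (G.deleteEdges N) c y ∧ 0 ∉ colorsAt (G.deleteEdges N) c y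
    then 4 else 1
  else c e + 2

lemma extendByMatching_of_notMem {e : Sym2 V} (he : e ∉ N) :
    extendByMatching G N c e = c e + 2 := if_neg he

open Classical in
lemma extendByMatching_of_mem {e : Sym2 V} (he : e ∈ N) :
    extendByMatching G N c e = if ∃ y ∈ e, 1 ∈ colorsAt (G.deleteEdges N) c y ∧
      0 ∉ colorsAt (G.deleteEdges N) c y then 4 else 1 := if_pos he

lemma mem_colorsAt_extendByMatching {v : V} {m : ℕ} :
    m ∈ colorsAt G (extendByMatching G N c) v ↔
      (∃ e ∈ N, e ∈ G.edgeSet ∧ v ∈ e ∧ extendByMatching G N c e = m) ∨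
        ∃ i ∈ colorsAt (G.deleteEdges N) c v, i + 2 = m := by
  constructor
  · rintro ⟨e, he, hve, rfl⟩
    by_cases heN : e ∈ N
    · exact Or.inl ⟨e, heN, he, hve, rfl⟩
    · exact Or.inr ⟨c e, ⟨e, by simp [edgeSet_deleteEdges, he, heN], hve, rfl⟩,
        (extendByMatching_of_notMem heN).symm⟩
  · rintro (⟨e, -, he, hve, rfl⟩ | ⟨i, ⟨e, he, hve, rfl⟩, rfl⟩)
    · exact ⟨e, he, hve, rfl⟩
    · rw [edgeSet_deleteEdges] at he
      exact ⟨e, he.1, hve, extendByMatching_of_notMem he.2⟩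

lemma extendByMatching_eq_one_or_eq_four (G : SimpleGraph V) (c : Sym2 V → ℕ) {e : Sym2 V}
    (he : e ∈ N) :
    extendByMatching G N c e = 1 ∨ extendByMatching G N c e = 4 := by
  rw [extendByMatching_of_mem he]
  split_ifs <;> simp

lemma isProperEdgeColoring_extendByMatching (hN : IsEdgeMatching N)
    (hc : IsProperEdgeColoring (G.deleteEdges N) c)
    (hc₂ : ∀ e ∈ (G.deleteEdges N).edgeSet, c e < 2) :
    IsProperEdgeColoring G (extendByMatching G N c) := by
  have hH : ∀ e ∈ G.edgeSet, e ∉ N → e ∈ (G.deleteEdges N).edgeSet := fun e he heN => by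
    simp [edgeSet_deleteEdges, he, heN]
  rintro e₁ h₁ e₂ h₂ hne ⟨w, hw₁, hw₂⟩
  by_cases hq₁ : e₁ ∈ N <;> by_cases hq₂ : e₂ ∈ N
  · exact absurd (hN e₁ hq₁ e₂ hq₂ w hw₁ hw₂) hne
  · have := hc₂ e₂ (hH e₂ h₂ hq₂)
    rw [extendByMatching_of_notMem hq₂]
    rcases extendByMatching_eq_one_or_eq_four G c hq₁ with h | h <;> omega
  · have := hc₂ e₁ (hH e₁ h₁ hq₁)
    rw [extendByMatching_of_notMem hq₁]
    rcases extendByMatching_eq_one_or_eq_four G c hq₂ with h | h <;> omega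
  · rw [extendByMatching_of_notMem hq₁, extendByMatching_of_notMem hq₂]
    have := hc e₁ (hH e₁ h₁ hq₁) e₂ (hH e₂ h₂ hq₂) hne ⟨w, hw₁, hw₂⟩
    omega

lemma mem_colorsAt_extendByMatching_of_lt_of_lt (hN : IsEdgeMatching N)
    (hc₂ : ∀ e ∈ (G.deleteEdges N).edgeSet, c e < 2)
    (hfull : ∀ e ∈ N, ∃ x ∈ e,
      0 ∈ colorsAt (G.deleteEdges N) c x ∧ 1 ∈ colorsAt (G.deleteEdges N) c x)
    {v : V} {a b k : ℕ} (ha : a ∈ colorsAt G (extendByMatching G N c) v)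
    (hb : b ∈ colorsAt G (extendByMatching G N c) v) (hak : a < k) (hkb : k < b) :
    k ∈ colorsAt G (extendByMatching G N c) v := by
  have hS : ∀ i ∈ colorsAt (G.deleteEdges N) c v, i < 2 := fun _ ⟨e, he, _, hce⟩ =>
    hce ▸ hc₂ e he
  rw [mem_colorsAt_extendByMatching] at ha hb ⊢
  rcases ha with ⟨e, he, -, hve, rfl⟩ | ⟨i, hi, rfl⟩ <;>
    rcases hb with ⟨e', he', -, hve', rfl⟩ | ⟨j, hj, rfl⟩
  · cases hN e he e' he' v hve hve'
    omega
  · -- `e` has colour `1`, so its end `v` does not see colour `3` alone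
    have := hS j hj
    rw [extendByMatching_of_mem he] at hak
    split_ifs at hak with htop
    · omega
    have h0 : 0 ∈ colorsAt (G.deleteEdges N) c v := by
      obtain rfl : j = 1 := by omega
      by_contra h0
      exact htop ⟨v, hve, hj, h0⟩
    exact Or.inr ⟨0, h0, by omega⟩
  · -- `e'` has colour `4` because of its other end, so `v` is the end seeing both `2` and `3`
    have := hS i hi
    rw [extendByMatching_of_mem he'] at hkb
    split_ifs at hkb with htop
    · obtain ⟨y, hy, hy1, hy0⟩ := htop
      obtain ⟨x, hx, hx0, hx1⟩ := hfull e' he'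
      obtain rfl : i = 0 := by omega
      have hvy : v ≠ y := by rintro rfl; exact hy0 hi
      have hxy : x ≠ y := by rintro rfl; exact hy0 hx0
      rw [(Sym2.mem_and_mem_iff hvy).mp ⟨hve', hy⟩, Sym2.mem_iff] at hx
      obtain rfl := hx.resolve_right hxy
      exact Or.inr ⟨1, hx1, by omega⟩
    · omega
  · have := hS i hi
    have := hS j hj
    omega

theorem isIntervalColoring_extendByMatching (hN : IsEdgeMatching N)
    (hc : IsProperEdgeColoring (G.deleteEdges N) c)
    (hc₂ : ∀ e ∈ (G.deleteEdges N).edgeSet, c e < 2)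
    (hfull : ∀ e ∈ N, ∃ x ∈ e,
      0 ∈ colorsAt (G.deleteEdges N) c x ∧ 1 ∈ colorsAt (G.deleteEdges N) c x) :
    IsIntervalColoring G (extendByMatching G N c) := by
  refine ⟨isProperEdgeColoring_extendByMatching hN hc hc₂, fun e _ => ?_,
    fun v a ha b hb k hak hkb => ?_⟩
  · by_cases he : e ∈ N
    · rcases extendByMatching_eq_one_or_eq_four G c he with h | h <;> omega
    · rw [extendByMatching_of_notMem he]
      omega
  rcases hak.eq_or_lt with rfl | hak
  · exact ha
  rcases hkb.eq_or_lt with rfl | hkb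
  · exact hb
  exact mem_colorsAt_extendByMatching_of_lt_of_lt hN hc₂ hfull ha hb hak hkb

end Matching

theorem exists_isEdgeMatching_deleteEdges [Finite V] {G : SimpleGraph V} (hG : G.Colorable 2)
    (hdeg : ∀ v, (G.incidenceSet v).ncard ≤ 3) :
    ∃ N : Set (Sym2 V), IsEdgeMatching N ∧
      (∀ v, ((G.deleteEdges N).incidenceSet v).ncard ≤ 2) ∧
      ∀ e ∈ N, ∃ x ∈ e, ((G.deleteEdges N).incidenceSet x).ncard = 2 := by
  obtain ⟨c, hc, hc₃⟩ := exists_isProperEdgeColoring_lt hG hdeg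
  set N := {e ∈ G.edgeSet | c e = 0 ∧ ∃ x ∈ e, (G.incidenceSet x).ncard = 3}
  have hN : IsEdgeMatching N :=
    fun e₁ ⟨h₁, hc₁, _⟩ e₂ ⟨h₂, hc₂, _⟩ v hv₁ hv₂ =>
      by_contra fun hne => hc e₁ h₁ e₂ h₂ hne ⟨v, hv₁, hv₂⟩ (hc₁.trans hc₂.symm)
  refine ⟨N, hN, fun v => ?_, fun e ⟨he, hce, x, hx, hx₃⟩ => ⟨x, hx, ?_⟩⟩
  · rw [incidenceSet_deleteEdges]
    rcases (hdeg v).lt_or_eq with hlt | hv₃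
    · exact (Set.ncard_le_ncard Set.sdiff_subset).trans (by omega)
    · obtain ⟨e, he, hve, hce⟩ := hc.mem_colorsAt hc₃ hv₃ (by norm_num : 0 < 3)
      have hsub : G.incidenceSet v \ N ⊆ G.incidenceSet v \ {e} :=
        Set.sdiff_subset_sdiff_right (Set.singleton_subset_iff.mpr ⟨he, hce, v, hve, hv₃⟩)
      calc (G.incidenceSet v \ N).ncard
          ≤ (G.incidenceSet v \ {e}).ncard := Set.ncard_le_ncard hsub
        _ = 2 := by
          have hev : e ∈ G.incidenceSet v := ⟨he, hve⟩
          rw [Set.ncard_sdiff_singleton_of_mem hev, hv₃]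
  · have hxN : G.incidenceSet x \ N = G.incidenceSet x \ {e} := by
      ext f
      simp only [Set.mem_sdiff, Set.mem_singleton_iff, and_congr_right_iff]
      exact fun hf => not_congr ⟨fun hfN => hN f hfN e ⟨he, hce, x, hx, hx₃⟩ x hf.2 hx,
        fun hfe => hfe ▸ ⟨he, hce, x, hx, hx₃⟩⟩
    rw [incidenceSet_deleteEdges, hxN,
      Set.ncard_sdiff_singleton_of_mem (show e ∈ G.incidenceSet x from ⟨he, hx⟩), hx₃]

lemma ncard_incidenceSet_eq_degree [Fintype V] (G : SimpleGraph V) [DecidableRel G.Adj] (v : V) :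
    (G.incidenceSet v).ncard = G.degree v := by
  classical
  rw [← Nat.card_coe_set_eq, Nat.card_eq_fintype_card, card_incidenceSet_eq_degree]

theorem bipartite_subcubic_intervalColorable_general [Fintype V]
    (G : SimpleGraph V) [DecidableRel G.Adj]
    (hbip : G.Colorable 2) (hdelta : G.maxDegree ≤ 3) :
    IntervalColorable G := by
  have hdeg : ∀ v, (G.incidenceSet v).ncard ≤ 3 := fun v =>
    (ncard_incidenceSet_eq_degree G v).trans_le ((G.degree_le_maxDegree v).trans hdelta)
  obtain ⟨N, hN, hdegN, hfull⟩ := exists_isEdgeMatching_deleteEdges hbip hdeg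
  obtain ⟨c, hc, hc₂⟩ :=
    exists_isProperEdgeColoring_lt (hbip.mono_left (G.deleteEdges_le N)) hdegN
  refine ⟨_, isIntervalColoring_extendByMatching hN hc hc₂ fun e he => ?_⟩
  obtain ⟨x, hx, hx₂⟩ := hfull e he
  exact ⟨x, hx, hc.mem_colorsAt hc₂ hx₂ zero_lt_two, hc.mem_colorsAt hc₂ hx₂ one_lt_two⟩

theorem bipartite_subcubic_intervalColorable [Fintype V] [DecidableEq V]
    (G : SimpleGraph V) [DecidableRel G.Adj]
    (hbip : G.Colorable 2) (hdelta : G.maxDegree ≤ 3) :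
    IntervalColorable G :=
  bipartite_subcubic_intervalColorable_general G hbip hdelta
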